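/- arXiv:2002.02148 — 3 statements merged into one kernel-verified Lean document; each statement's English description precedes it below -/
import Mathlib

section
/- Closed-form evaluation of the diagonal sum of ĉ_o: for every integer m ≥ 0, ∑_{i=0}^{m} ĉ_o(i, m−i; s) = [(s;t)_m (s²a²c²/t³;t)_m (−c/d;t)_m (sab/t;t)_m / ((s²abcd/t²;t)_m (s²a²c²/t³;t²)_m (t;t)_m)] · d^m · ∑_{k=0}^{m} [(t^{−m};t)_k (−a/b;t)_k (scd/t;t)_k (−t^{−m+2}/(sac);t)_k / ((t;t)_k (−sac/t;t)_k (−t^{−m+1}d/c;t)_k (t^{−m+2}/(sab);t)_k)] t^k, as an identity of rational functions in a, b, c, d, t, s (the inner sum is the terminating basic hypergeometric series ₄φ₃[t^{−m}, −a/b, scd/t, −t^{−m+2}/sac; −t^{−m+1}d/c, −sac/t, t^{−m+2}/sab; t, t]). -/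
/-!
Closed-form evaluation of the diagonal sum of `ĉ_o` as a terminating ₄φ₃
series, as an identity in the rational function field ℚ(a,b,c,d,t,s).
-/

open Finset

noncomputable section

/-- The rational function field ℚ(a,b,c,d,t,s). -/
abbrev RF : Type := FractionRing (MvPolynomial (Fin 6) ℚ)

def gen (i : Fin 6) : RF := algebraMap (MvPolynomial (Fin 6) ℚ) RF (MvPolynomial.X i)

def a : RF := gen 0
def b : RF := gen 1
def c : RF := gen 2
def d : RF := gen 3
def t : RF := gen 4
def s : RF := gen 5

/-- The q-Pochhammer symbol (z;q)_k. -/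
def qPoch (z q : RF) (k : ℕ) : RF := ∏ j ∈ Finset.range k, (1 - z * q ^ j)

/-- `ĉ_o(i,j;s)`. -/
def co (S : RF) (i j : ℕ) : RF :=
  ((qPoch (-(a/b)) t i * qPoch (S*c*d/t) t i) / (qPoch t t i * qPoch (-(S*a*c/t)) t i)) *
  ((qPoch S t (i+j) * qPoch (-(S*a*c/t)) t (i+j) * qPoch (S^2*a^2*c^2/t^3) t (i+j)) /
    (qPoch (S^2*a*b*c*d/t^2) t (i+j) * qPoch (S^2*a^2*c^2/t^3) (t^2) (i+j))) *
  ((qPoch (-(c/d)) t j * qPoch (S*a*b/t) t j) / (qPoch t t j * qPoch (-(S*a*c/t)) t j)) *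
  b ^ i * d ^ j

/-!
Term by term: the `k`-th term of the prefactor times the `₄φ₃` equals `ĉ_o(k, m-k)`.
Reversing the last `k` factors of `(z;t)_m` gives
`(z;t)_m = (z;t)_{m-k} · ∏_{j<k} (-z t^{m-k+j}) · (t^{1-m}/z;t)_k`, which trades the four
Pochhammer symbols of length `m - k` in `ĉ_o` (bases `-c/d`, `sab/t`, `t`, `-sac/t`) for those of
length `m` and the four `₄φ₃` parameters involving `t^{-m}`. The leading factors leave
`(t·(sac/t) / ((c/d)·(sab/t)))^k = (dt/b)^k`, and `(dt/b)^k b^k d^{m-k} = d^m t^k`.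
The Pochhammer symbols that have to be cancelled are nonzero in `ℚ(a,b,c,d,t,s)`: each factor,
with denominators cleared, is a polynomial that does not vanish at `(2,…,2)`.
-/

section Reversal

variable {z w q : RF}

lemma qPoch_add (z q : RF) (n k : ℕ) :
    qPoch z q (n + k) = qPoch z q n * qPoch (z * q ^ n) q k := by
  simp only [qPoch, prod_range_add, pow_add, mul_assoc]

lemma qPoch_eq_prod_mul_qPoch_reverse (hz : z ≠ 0) (hq : q ≠ 0) (k : ℕ) :
    qPoch z q k = (∏ j ∈ range k, -(z * q ^ j)) * qPoch (q ^ (1 - (k : ℤ)) / z) q k := by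
  rw [qPoch, qPoch, ← prod_range_reflect (fun j => 1 - q ^ (1 - (k : ℤ)) / z * q ^ j),
    ← prod_mul_distrib]
  refine prod_congr rfl fun j hj => ?_
  have hjk : j < k := mem_range.mp hj
  have hexp : q ^ (1 - (k : ℤ)) * q ^ (k - 1 - j) * q ^ j = 1 := by
    rw [← zpow_natCast, ← zpow_natCast, ← zpow_add₀ hq, ← zpow_add₀ hq]
    convert zpow_zero q using 2
    omega
  field_simp
  linear_combination -hexp

lemma qPoch_add_eq_mul_reverse (hz : z ≠ 0) (hq : q ≠ 0) (n k : ℕ) :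
    qPoch z q (n + k) = qPoch z q n * (∏ j ∈ range k, -(z * q ^ (n + j))) *
      qPoch (q ^ (1 - ((n + k : ℕ) : ℤ)) / z) q k := by
  have hparam : q ^ (1 - (k : ℤ)) / (z * q ^ n) = q ^ (1 - ((n + k : ℕ) : ℤ)) / z := by
    rw [div_mul_eq_div_div_swap, ← zpow_natCast q n, ← zpow_sub₀ hq]
    push_cast
    ring_nf
  rw [qPoch_add, qPoch_eq_prod_mul_qPoch_reverse (mul_ne_zero hz (pow_ne_zero n hq)) hq, hparam]
  simp only [pow_add, mul_assoc]

lemma qPoch_reverse_ne_zero (hz : z ≠ 0) (hq : q ≠ 0) {n k : ℕ}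
    (h : qPoch z q (n + k) ≠ 0) : qPoch (q ^ (1 - ((n + k : ℕ) : ℤ)) / z) q k ≠ 0 := by
  rw [qPoch_add_eq_mul_reverse hz hq] at h
  exact right_ne_zero_of_mul h

lemma qPoch_div_qPoch_of_add (hz : z ≠ 0) (hw : w ≠ 0) (hq : q ≠ 0) {n k : ℕ}
    (hzk : qPoch z q (n + k) ≠ 0) (hwk : qPoch w q (n + k) ≠ 0) :
    qPoch z q n / qPoch w q n = qPoch z q (n + k) / qPoch w q (n + k) * (w / z) ^ k *
      (qPoch (q ^ (1 - ((n + k : ℕ) : ℤ)) / w) q k /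
        qPoch (q ^ (1 - ((n + k : ℕ) : ℤ)) / z) q k) := by
  have hlead : ∏ j ∈ range k, -(z * q ^ (n + j)) =
      (z / w) ^ k * ∏ j ∈ range k, -(w * q ^ (n + j)) := by
    rw [← card_range k, ← prod_const, card_range, ← prod_mul_distrib]
    refine prod_congr rfl fun j _ => ?_
    field_simp
  rw [qPoch_add_eq_mul_reverse hz hq] at hzk ⊢
  rw [qPoch_add_eq_mul_reverse hw hq] at hwk ⊢
  simp only [mul_ne_zero_iff] at hzk hwk
  obtain ⟨-, hz'⟩ := hzk
  obtain ⟨⟨hwn, hlead_w⟩, hw'⟩ := hwk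
  rw [hlead, div_pow, div_pow]
  field_simp

end Reversal

section Nonvanishing

open MvPolynomial

lemma algebraMap_X (i : Fin 6) : algebraMap (MvPolynomial (Fin 6) ℚ) RF (X i) = gen i := rfl

lemma ne_zero_of_mul_eq_algebraMap {x y : RF} {p : MvPolynomial (Fin 6) ℚ} (v : Fin 6 → ℚ)
    (hp : eval v p ≠ 0) (h : x * y = algebraMap _ RF p) : x ≠ 0 := by
  rintro rfl
  rw [zero_mul, eq_comm, IsFractionRing.to_map_eq_zero_iff] at h
  simp [h] at hp

lemma gen_ne_zero (i : Fin 6) : gen i ≠ 0 :=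
  ne_zero_of_mul_eq_algebraMap (p := X i) 1 (by simp) (mul_one _)

lemma a_ne_zero : a ≠ 0 := gen_ne_zero 0
lemma b_ne_zero : b ≠ 0 := gen_ne_zero 1
lemma c_ne_zero : c ≠ 0 := gen_ne_zero 2
lemma d_ne_zero : d ≠ 0 := gen_ne_zero 3
lemma t_ne_zero : t ≠ 0 := gen_ne_zero 4
lemma s_ne_zero : s ≠ 0 := gen_ne_zero 5

lemma qPoch_ne_zero {z q : RF} {k : ℕ} (h : ∀ j, 1 - z * q ^ j ≠ 0) : qPoch z q k ≠ 0 :=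
  prod_ne_zero_iff.mpr fun j _ => h j

lemma qPoch_t_t_ne_zero (k : ℕ) : qPoch t t k ≠ 0 := by
  refine qPoch_ne_zero fun j => ne_zero_of_mul_eq_algebraMap (y := 1) (p := 1 - X 4 ^ (j + 1))
    (fun _ => 2) ?_ ?_
  · simp only [map_sub, map_pow, eval_X, map_one]
    exact sub_ne_zero.mpr (one_lt_pow₀ one_lt_two j.succ_ne_zero).ne
  · simp only [map_sub, map_pow, map_one, algebraMap_X]
    exact (mul_one _).trans (by rw [pow_succ']; rfl)

lemma qPoch_neg_sac_div_t_ne_zero (k : ℕ) : qPoch (-(s * a * c / t)) t k ≠ 0 := by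
  refine qPoch_ne_zero fun j => ne_zero_of_mul_eq_algebraMap (y := t)
    (p := X 4 + X 5 * X 0 * X 2 * X 4 ^ j) (fun _ => 2) ?_ ?_
  · simp only [map_add, map_mul, map_pow, eval_X]
    positivity
  simp only [map_add, map_mul, map_pow, algebraMap_X]
  field_simp [t_ne_zero]
  rw [sub_neg_eq_add]
  rfl

lemma qPoch_neg_c_div_d_ne_zero (k : ℕ) : qPoch (-(c / d)) t k ≠ 0 := by
  refine qPoch_ne_zero fun j => ne_zero_of_mul_eq_algebraMap (y := d)
    (p := X 3 + X 2 * X 4 ^ j) (fun _ => 2) ?_ ?_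
  · simp only [map_add, map_mul, map_pow, eval_X]
    positivity
  simp only [map_add, map_mul, map_pow, algebraMap_X]
  field_simp [d_ne_zero]
  rw [sub_neg_eq_add]
  rfl

lemma qPoch_sab_div_t_ne_zero (k : ℕ) : qPoch (s * a * b / t) t k ≠ 0 := by
  refine qPoch_ne_zero fun j => ne_zero_of_mul_eq_algebraMap (y := t)
    (p := X 4 - X 5 * X 0 * X 1 * X 4 ^ j) (fun _ => 2) ?_ ?_
  · simp only [map_sub, map_mul, map_pow, eval_X]
    have : (1 : ℚ) ≤ 2 ^ j := one_le_pow₀ one_le_two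
    intro h
    linarith
  simp only [map_sub, map_mul, map_pow, algebraMap_X]
  field_simp [t_ne_zero]
  rfl

lemma qPoch_s2abcd_div_t2_ne_zero (k : ℕ) : qPoch (s ^ 2 * a * b * c * d / t ^ 2) t k ≠ 0 := by
  refine qPoch_ne_zero fun j => ne_zero_of_mul_eq_algebraMap (y := t ^ 2)
    (p := X 4 ^ 2 - X 5 ^ 2 * X 0 * X 1 * X 2 * X 3 * X 4 ^ j) (fun _ => 2) ?_ ?_
  · simp only [map_sub, map_mul, map_pow, eval_X]
    have : (1 : ℚ) ≤ 2 ^ j := one_le_pow₀ one_le_two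
    intro h
    linarith
  simp only [map_sub, map_mul, map_pow, algebraMap_X]
  field_simp [t_ne_zero]
  rfl

lemma qPoch_s2a2c2_div_t3_ne_zero (k : ℕ) :
    qPoch (s ^ 2 * a ^ 2 * c ^ 2 / t ^ 3) (t ^ 2) k ≠ 0 := by
  refine qPoch_ne_zero fun j => ne_zero_of_mul_eq_algebraMap (y := t ^ 3)
    (p := X 4 ^ 3 - X 5 ^ 2 * X 0 ^ 2 * X 2 ^ 2 * (X 4 ^ 2) ^ j) (fun _ => 2) ?_ ?_
  · simp only [map_sub, map_mul, map_pow, eval_X]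
    have : (1 : ℚ) ≤ (2 ^ 2) ^ j := one_le_pow₀ (by norm_num)
    intro h
    linarith
  simp only [map_sub, map_mul, map_pow, algebraMap_X]
  field_simp [t_ne_zero]
  rfl

end Nonvanishing

lemma co_eq_prefactor_mul_term (n k : ℕ) :
    co s k n =
    ((qPoch s t (n+k) * qPoch (s^2*a^2*c^2/t^3) t (n+k) * qPoch (-(c/d)) t (n+k) *
        qPoch (s*a*b/t) t (n+k)) /
      (qPoch (s^2*a*b*c*d/t^2) t (n+k) * qPoch (s^2*a^2*c^2/t^3) (t^2) (n+k) *
        qPoch t t (n+k))) * d ^ (n+k) *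
    (((qPoch (t ^ (-((n+k : ℕ):ℤ))) t k * qPoch (-(a/b)) t k * qPoch (s*c*d/t) t k *
          qPoch (-(t ^ (2 - ((n+k : ℕ):ℤ)) / (s*a*c))) t k) /
        (qPoch t t k * qPoch (-(s*a*c/t)) t k * qPoch (-(t ^ (1 - ((n+k : ℕ):ℤ)) * d / c)) t k *
          qPoch (t ^ (2 - ((n+k : ℕ):ℤ)) / (s*a*b)) t k)) * t ^ k) := by
  have ht := t_ne_zero
  have hcd : -(c / d) ≠ 0 := neg_ne_zero.mpr (div_ne_zero c_ne_zero d_ne_zero)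
  have hsab : s * a * b / t ≠ 0 :=
    div_ne_zero (mul_ne_zero (mul_ne_zero s_ne_zero a_ne_zero) b_ne_zero) ht
  have hsac : -(s * a * c / t) ≠ 0 :=
    neg_ne_zero.mpr (div_ne_zero (mul_ne_zero (mul_ne_zero s_ne_zero a_ne_zero) c_ne_zero) ht)
  -- the Pochhammer symbols that `grind` has to cancel at the end
  have := qPoch_t_t_ne_zero k
  have := qPoch_t_t_ne_zero (n + k)
  have := qPoch_neg_sac_div_t_ne_zero k
  have := qPoch_neg_sac_div_t_ne_zero (n + k)
  have := qPoch_s2abcd_div_t2_ne_zero (n + k)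
  have := qPoch_s2a2c2_div_t3_ne_zero (n + k)
  have := qPoch_reverse_ne_zero hcd ht (qPoch_neg_c_div_d_ne_zero (n + k))
  have := qPoch_reverse_ne_zero hsab ht (qPoch_sab_div_t_ne_zero (n + k))
  rw [co, add_comm k n, mul_div_mul_comm (qPoch (-(c / d)) t n),
    qPoch_div_qPoch_of_add (k := k) hcd ht ht (qPoch_neg_c_div_d_ne_zero _) (qPoch_t_t_ne_zero _),
    qPoch_div_qPoch_of_add (k := k) hsab hsac ht (qPoch_sab_div_t_ne_zero _)
      (qPoch_neg_sac_div_t_ne_zero _)]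
  set T := t ^ (1 - ((n + k : ℕ) : ℤ)) with hT
  have htwo : t ^ (2 - ((n + k : ℕ) : ℤ)) = T * t := by
    rw [hT, ← zpow_add_one₀ ht]; ring_nf
  have hneg : t ^ (-((n + k : ℕ) : ℤ)) = T / t := by
    rw [hT, div_eq_mul_inv, ← zpow_sub_one₀ ht]; ring_nf
  have hsac_param : -(T * t / (s * a * c)) = T / (-(s * a * c / t)) := by
    field_simp [a_ne_zero, c_ne_zero, s_ne_zero]
  have hcd_param : -(T * d / c) = T / (-(c / d)) := by field_simp [c_ne_zero, d_ne_zero]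
  have hsab_param : T * t / (s * a * b) = T / (s * a * b / t) := by
    field_simp [a_ne_zero, b_ne_zero, s_ne_zero]
  have hlead : (t / -(c / d)) ^ k * (-(s * a * c / t) / (s * a * b / t)) ^ k * b ^ k =
      d ^ k * t ^ k := by
    rw [← mul_pow, ← mul_pow, ← mul_pow]
    congr 1
    field_simp [a_ne_zero, b_ne_zero, c_ne_zero, d_ne_zero, s_ne_zero]
  rw [htwo, hneg, hsac_param, hcd_param, hsab_param, pow_add]
  grind

/-- `∑_{i=0}^m ĉ_o(i,m−i;s)` equals the prefactor times the terminating
`₄φ₃[t^{−m}, −a/b, scd/t, −t^{−m+2}/sac; −t^{−m+1}d/c, −sac/t, t^{−m+2}/sab; t, t]`. -/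
theorem diagonal_sum_closed_form (m : ℕ) :
    ∑ i ∈ Finset.range (m+1), co s i (m - i) =
    ((qPoch s t m * qPoch (s^2*a^2*c^2/t^3) t m * qPoch (-(c/d)) t m * qPoch (s*a*b/t) t m) /
      (qPoch (s^2*a*b*c*d/t^2) t m * qPoch (s^2*a^2*c^2/t^3) (t^2) m * qPoch t t m)) * d ^ m *
    ∑ k ∈ Finset.range (m+1),
      ((qPoch (t ^ (-(m:ℤ))) t k * qPoch (-(a/b)) t k * qPoch (s*c*d/t) t k *
          qPoch (-(t ^ (2 - (m:ℤ)) / (s*a*c))) t k) /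
        (qPoch t t k * qPoch (-(s*a*c/t)) t k * qPoch (-(t ^ (1 - (m:ℤ)) * d / c)) t k *
          qPoch (t ^ (2 - (m:ℤ)) / (s*a*b)) t k)) * t ^ k := by
  rw [mul_sum]
  refine sum_congr rfl fun k hk => ?_
  obtain ⟨n, rfl⟩ := Nat.exists_eq_add_of_le' (Nat.lt_succ_iff.mp (mem_range.mp hk))
  rw [Nat.add_sub_cancel]
  exact co_eq_prefactor_mul_term n k

end
end

section
/- Expansion of E_r in BC_n monomial symmetric functions: let x₁, …, x_n be invertible elements of a commutative ring (or nonzero elements of a field), let y be an indeterminate, and define E_r = E_r(x) for 0 ≤ r ≤ 2n by ∏_{i=1}^{n} (1 − y x_i)(1 − y x_i^{−1}) = ∑_{r=0}^{2n} (−1)^r E_r y^r. Define the monomial symmetric Laurent polynomial m_{(1^r)}(x) := ∑_{S ⊆ {1,…,n}, |S| = r} ∑_{ε : S → {±1}} ∏_{i ∈ S} x_i^{ε(i)} for 0 ≤ r ≤ n (with m_{(1^0)} = 1). Then for every 0 ≤ r ≤ n, E_r(x) = ∑_{k=0}^{⌊r/2⌋} binom(n−r+2k, k) · m_{(1^{r−2k})}(x),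 where binom denotes the ordinary binomial coefficient. -/
/-!
Each factor is `(1 - y x)(1 - y / x) = (1 + y²) - y (x + x⁻¹)`, and `m_{(1^j)}(x)` is the `j`-th
elementary symmetric function of the `x_i + x_i⁻¹`. Expanding the product therefore gives
`∑_j (-y)^j (1 + y²)^(n-j) m_{(1^j)}(x)`, and the coefficient of `y^r` in `y^j (1 + y²)^(n-j)` is
`binom(n - j, k)` when `j = r - 2k` and zero otherwise.
-/

open Finset

namespace Finset

theorem prod_add_mul_eq_sum_powersetCard {ι R : Type*} [CommSemiring R] (a b : R) (f : ι → R)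
    (s : Finset ι) :
    ∏ i ∈ s, (a + b * f i) =
      ∑ j ∈ range (#s + 1), (∑ t ∈ s.powersetCard j, ∏ i ∈ t, f i) * b ^ j * a ^ (#s - j) := by
  classical
  simp_rw [add_comm a, prod_add, sum_powerset, sum_mul]
  refine sum_congr rfl fun j _ => sum_congr rfl fun t ht => ?_
  rw [mem_powersetCard] at ht
  rw [prod_mul_distrib, prod_const, prod_const, card_sdiff_of_subset ht.1, ht.2]
  ring

end Finset

namespace Polynomial

variable {R : Type*}

theorem one_sub_C_mul_X_mul_one_sub_C_mul_X [CommRing R] {a b : R} (hab : a * b = 1) :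
    (1 - C a * X) * (1 - C b * X) = (1 + X ^ 2) + -X * C (a + b) := by
  have : C a * C b = (1 : R[X]) := by rw [← C_mul, hab, C_1]
  rw [C_add]
  linear_combination X ^ 2 * this

theorem coeff_X_pow_mul_one_add_X_sq_pow [CommSemiring R] (j N r : ℕ) :
    ((X : R[X]) ^ j * (1 + X ^ 2) ^ N).coeff r =
      if j ≤ r ∧ 2 ∣ r - j then (N.choose ((r - j) / 2) : R) else 0 := by
  have hexp : (1 + X ^ 2 : R[X]) ^ N = expand R 2 ((1 + X) ^ N) := by
    rw [map_pow, map_add, map_one, expand_X]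
  rw [coeff_X_pow_mul', hexp, coeff_expand two_pos, coeff_one_add_X_pow]
  split_ifs <;> simp_all

theorem coeff_sum_C_mul_X_pow_mul_one_add_X_sq_pow [CommSemiring R] (c : ℕ → R) {N r : ℕ}
    (hr : r ≤ N) :
    (∑ j ∈ range (N + 1), C (c j) * X ^ j * (1 + X ^ 2) ^ (N - j)).coeff r =
      ∑ k ∈ range (r / 2 + 1), (Nat.choose (N - r + 2 * k) k : R) * c (r - 2 * k) := by
  have hsupp : {j ∈ range (N + 1) | j ≤ r ∧ 2 ∣ r - j} = (range (r / 2 + 1)).image (r - 2 * ·) := by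
    ext j
    simp only [mem_filter, mem_range, mem_image]
    constructor
    · rintro ⟨-, hjr, k, hk⟩
      exact ⟨k, by omega, by omega⟩
    · rintro ⟨k, hk, rfl⟩
      exact ⟨by omega, by omega, k, by omega⟩
  have hinj : Set.InjOn (r - 2 * ·) (range (r / 2 + 1)) := by
    intro k hk l hl h
    simp only [coe_range, Set.mem_Iio] at hk hl
    simp only at h
    omega
  simp_rw [finsetSum_coeff, mul_assoc, coeff_C_mul, coeff_X_pow_mul_one_add_X_sq_pow, mul_ite,
    mul_zero, ← sum_filter, hsupp, sum_image hinj]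
  refine sum_congr rfl fun k hk => ?_
  rw [mem_range] at hk
  rw [show N - (r - 2 * k) = N - r + 2 * k by omega, show (r - (r - 2 * k)) / 2 = k by omega,
    mul_comm]

end Polynomial

open Polynomial

/-- If `E_r` is defined by `∏_{i=1}^n (1−y x_i)(1−y/x_i) = ∑_r (−1)^r E_r y^r`
(i.e. `E_r = (−1)^r` times the `r`-th coefficient of the product polynomial in `y`),
and `m_r = m_{(1^r)}(x)` is the sum of all monomials `∏_{i∈S} x_i^{±1}` over
`r`-element subsets `S` and sign choices, then for `0 ≤ r ≤ n`:
`E_r = ∑_{k=0}^{⌊r/2⌋} binom(n−r+2k, k) m_{r−2k}`. -/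
theorem E_expansion_in_monomials {K : Type*} [Field K] (n : ℕ) (x : Fin n → K)
    (hx : ∀ i, x i ≠ 0)
    (E : ℕ → K)
    (hE : ∀ r : ℕ,
      E r = (-1 : K)^r *
        (∏ i : Fin n,
          ((1 - Polynomial.C (x i) * Polynomial.X) *
           (1 - Polynomial.C (x i)⁻¹ * Polynomial.X))).coeff r)
    (m : ℕ → K)
    (hm : ∀ r : ℕ,
      m r = ∑ S ∈ Finset.powersetCard r (Finset.univ : Finset (Fin n)),
              ∑ T ∈ S.powerset, (∏ i ∈ T, x i) * ∏ i ∈ S \ T, (x i)⁻¹) :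
    ∀ r : ℕ, r ≤ n →
      E r = ∑ k ∈ Finset.range (r/2 + 1), (Nat.choose (n - r + 2*k) k : K) * m (r - 2*k) := by
  intro r hr
  have hm_esymm (j : ℕ) : m j = ∑ S ∈ powersetCard j univ, ∏ i ∈ S, (x i + (x i)⁻¹) := by
    simp only [hm, prod_add]
  have hprod : ∏ i, (1 - C (x i) * X) * (1 - C (x i)⁻¹ * X) =
      ∑ j ∈ range (n + 1), C ((-1) ^ j * m j) * X ^ j * (1 + X ^ 2) ^ (n - j) := by
    simp_rw [one_sub_C_mul_X_mul_one_sub_C_mul_X (mul_inv_cancel₀ (hx _)),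
      prod_add_mul_eq_sum_powersetCard, card_univ, Fintype.card_fin]
    refine sum_congr rfl fun j _ => ?_
    simp only [hm_esymm, map_mul, map_sum, map_prod, map_pow, map_neg, map_one]
    ring
  rw [hE, hprod, coeff_sum_C_mul_X_pow_mul_one_add_X_sq_pow _ hr, mul_sum]
  refine sum_congr rfl fun k hk => ?_
  have hsign : (-1 : K) ^ r * (-1) ^ (r - 2 * k) = 1 := by
    rw [← pow_add, Even.neg_one_pow ⟨r - k, by rw [mem_range] at hk; omega⟩]
  linear_combination (Nat.choose (n - r + 2 * k) k * m (r - 2 * k) : K) * hsign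
end

section
/- Combinatorial solution of the recursion: let K be a field and a, b, c, d, t ∈ K generic (all denominators below nonzero), and let C = (C_{i,j}) be the unique family with C_{i,j} = 0 for i > j, C_{i,i} = 1, and C_{i,j} = C_{i−1,j−1} + g(t^i|a,b,c,d)·C_{i,j−1} + f(t^i|a,b,c,d)·C_{i+1,j−1} for i ≥ 0, j ≥ 1 (convention C_{−1,j} = 0), with C_{0,0} = 1. For integers m, n ≥ 0 and r ≥ 0, let 𝒫^{(r)}_{m,n} be the (finite) set of words X₁X₂⋯X_{m+n} in which each letter X_i is either an f-letter f(t^{r−d_i}) or a g-letter g(t^{r−d_i}) with d_i ∈ ℤ, subject to: (1) 0 ≤ d₁ ≤ r; (2) exactly m letters are f-letters and exactly n are g-letters; (3) for 1 ≤ i < m+n, if X_i is an f-letter then d_i − 1 ≤ d_{i+1} ≤ r, and if X_i is a g-letter then d_i ≤ d_{i+1} ≤ r. The weight of a word is the product of its letters, where f(s) := f(s|a,b,c,d) and g(s) := g(s|a,b,c,d). Then for all r, k ∈ ℤ_{≥0}: C_{r,r+2k} = ∑_{k₁+k₂=k, k₁,k₂ ≥ 0} ∑_{X ∈ 𝒫^{(r)}_{k₁,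 2k₂}} weight(X), and C_{r,r+2k+1} = ∑_{k₁+k₂=k, k₁,k₂ ≥ 0} ∑_{X ∈ 𝒫^{(r)}_{k₁, 2k₂+1}} weight(X) (the empty word has weight 1). -/
/-!
Sort the words of `𝒫^{(r)}_{m,n}` by their first letter `X₁ = f(t^{r-d₁})` or `g(t^{r-d₁})`.
Since a letter's value depends only on `r - dᵢ`, lowering all indices by one maps the words with
`d₁ ≥ 1` bijectively and weight-preservingly onto `𝒫^{(r-1)}_{m,n}`. If `d₁ = 0`, deleting `X₁`
leaves, after raising the indices by one, a word of `𝒫^{(r+1)}_{m-1,n}` when `X₁ = f(t^r)`, and a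
word of `𝒫^{(r)}_{m,n-1}` when `X₁ = g(t^r)`. So the weight sums satisfy
`W_r(m,n) = W_{r-1}(m,n) + f(t^r) W_{r+1}(m-1,n) + g(t^r) W_r(m,n-1)`, and summing over
`2m + n = l` gives the recursion of `C_{r,r+l}`, which determines `C` uniquely.
-/

open Finset

noncomputable section

/-- `f(s|a,b,c,d)` with parameter `t`. -/
def fF {K : Type*} [Field K] (a b c d t s : K) : K :=
  ((1 - a*b*c*d*s/t) * (1 - t*s) * (1 - a*b*s) * (1 - a*c*s) * (1 - a*d*s) *
    (1 - b*c*s) * (1 - b*d*s) * (1 - c*d*s)) /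
  ((1 - a*b*c*d*s^2/t) * (1 - a*b*c*d*s^2)^2 * (1 - a*b*c*d*t*s^2))

/-- `g₁(s|a,b,c,d)` with parameter `t`. -/
def g1F {K : Type*} [Field K] (a b c d t s : K) : K :=
  ((a + b + c + d - (a*b*c + a*b*d + a*c*d + b*c*d)*s/t) / (1 - a*b*c*d*s^2/t^2)) *
    ((1 - s)/(1 - t))

/-- `g(s|a,b,c,d) = g₁(s|a,b,c,d) − g₁(st|a,b,c,d)`. -/
def gF {K : Type*} [Field K] (a b c d t s : K) : K :=
  g1F a b c d t s - g1F a b c d t (s*t)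

/-- A letter is a pair `(isF, d)`: an `f`-letter `f(t^{r−d})` if `isF = true`,
or a `g`-letter `g(t^{r−d})` if `isF = false`; its value is the corresponding
rational function. -/
def letterVal {K : Type*} [Field K] (a b c d t : K) (r : ℕ) (X : Bool × ℤ) : K :=
  if X.1 then fF a b c d t (t ^ ((r:ℤ) - X.2)) else gF a b c d t (t ^ ((r:ℤ) - X.2))

/-- The set `𝒫^{(r)}_{m,n}` of admissible words `X₁⋯X_{m+n}` with exactly `m`
`f`-letters and `n` `g`-letters: `0 ≤ d₁ ≤ r`; after an `f`-letter
`d_i − 1 ≤ d_{i+1} ≤ r`, and after a `g`-letter `d_i ≤ d_{i+1} ≤ r`. -/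
def wordSet (r m n : ℕ) : Set (Fin (m+n) → Bool × ℤ) :=
  { w | (∀ h : 0 < m + n, 0 ≤ (w ⟨0, h⟩).2 ∧ (w ⟨0, h⟩).2 ≤ (r:ℤ)) ∧
        (Finset.univ.filter (fun i => (w i).1 = true)).card = m ∧
        (Finset.univ.filter (fun i => (w i).1 = false)).card = n ∧
        (∀ (i : ℕ) (h : i + 1 < m + n),
          ((w ⟨i, by omega⟩).1 = true → (w ⟨i, by omega⟩).2 - 1 ≤ (w ⟨i+1, h⟩).2) ∧
          ((w ⟨i, by omega⟩).1 = false → (w ⟨i, by omega⟩).2 ≤ (w ⟨i+1, h⟩).2) ∧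
          (w ⟨i+1, h⟩).2 ≤ (r:ℤ)) }

section Words

variable {N : ℕ}

def shiftWord (δ : ℤ) (w : Fin N → Bool × ℤ) : Fin N → Bool × ℤ :=
  fun i => ((w i).1, (w i).2 + δ)

/-- `lo` is the lower bound on the index of the first letter: `0` for the words of `wordSet`, and
`d - 1` resp. `d` for what follows an `f`- resp. `g`-letter of index `d`. -/
def IsAdmissible (r lo : ℤ) (w : Fin N → Bool × ℤ) : Prop :=
  (∀ h : 0 < N, lo ≤ (w ⟨0, h⟩).2 ∧ (w ⟨0, h⟩).2 ≤ r) ∧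
  ∀ (i : ℕ) (h : i + 1 < N),
    (w ⟨i, by omega⟩).2 - (if (w ⟨i, by omega⟩).1 then 1 else 0) ≤ (w ⟨i + 1, h⟩).2 ∧
      (w ⟨i + 1, h⟩).2 ≤ r

theorem isAdmissible_cons {r lo : ℤ} (x : Bool × ℤ) (u : Fin N → Bool × ℤ) :
    IsAdmissible r lo (Fin.cons x u : Fin (N + 1) → Bool × ℤ) ↔
      lo ≤ x.2 ∧ x.2 ≤ r ∧ IsAdmissible r (x.2 - if x.1 then 1 else 0) u := by
  constructor
  · rintro ⟨hfirst, hchain⟩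
    exact ⟨(hfirst N.succ_pos).1, (hfirst N.succ_pos).2, fun h => hchain 0 (Nat.succ_lt_succ h),
      fun i h => hchain (i + 1) (Nat.succ_lt_succ h)⟩
  · rintro ⟨hlo, hr, hfirst, hchain⟩
    refine ⟨fun _ => ⟨hlo, hr⟩, fun i h => ?_⟩
    cases i with
    | zero => exact hfirst (by omega)
    | succ i => exact hchain i (by omega)

theorem isAdmissible_shiftWord {r lo : ℤ} (δ : ℤ) (w : Fin N → Bool × ℤ) :
    IsAdmissible (r + δ) (lo + δ) (shiftWord δ w) ↔ IsAdmissible r lo w := by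
  simp only [IsAdmissible, shiftWord, add_sub_right_comm, add_le_add_iff_right]
  rfl

theorem IsAdmissible.bounds {r lo : ℤ} {w : Fin N → Bool × ℤ} (hw : IsAdmissible r lo w)
    (i : Fin N) : lo - i ≤ (w i).2 ∧ (w i).2 ≤ r := by
  obtain ⟨i, hi⟩ := i
  induction i with
  | zero => simpa using hw.1 hi
  | succ i ih =>
    have hstep := hw.2 i hi
    have hprev := ih (by omega)
    refine ⟨?_, hstep.2⟩
    dsimp only at hprev ⊢
    split_ifs at hstep <;> push_cast <;> omega

def admissibleWords (r lo : ℤ) (N m n : ℕ) : Set (Fin N → Bool × ℤ) :=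
  {w | IsAdmissible r lo w ∧ #{i | (w i).1 = true} = m ∧ #{i | (w i).1 = false} = n}

theorem admissibleWords_finite (r lo : ℤ) (N m n : ℕ) : (admissibleWords r lo N m n).Finite := by
  refine (Set.Finite.pi' fun _ => Set.finite_univ.prod (Set.finite_Icc (lo - N) r)).subset ?_
  rintro w ⟨hw, -⟩ i
  have hbounds := hw.bounds i
  exact ⟨trivial, by omega, hbounds.2⟩

theorem shiftWord_mem_admissibleWords {r lo : ℤ} {m n : ℕ} (δ : ℤ) (w : Fin N → Bool × ℤ) :
    shiftWord δ w ∈ admissibleWords (r + δ) (lo + δ) N m n ↔ w ∈ admissibleWords r lo N m n :=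
  and_congr_left' (isAdmissible_shiftWord δ w)

theorem cons_mem_admissibleWords {r lo : ℤ} {m n : ℕ} (x : Bool × ℤ) (u : Fin N → Bool × ℤ) :
    (Fin.cons x u : Fin (N + 1) → Bool × ℤ) ∈ admissibleWords r lo (N + 1) m n ↔
      lo ≤ x.2 ∧ x.2 ≤ r ∧ IsAdmissible r (x.2 - if x.1 then 1 else 0) u ∧
        #{i | (u i).1 = true} + (if x.1 then 1 else 0) = m ∧
        #{i | (u i).1 = false} + (if x.1 then 0 else 1) = n := by
  simp only [admissibleWords, Set.mem_ofPred_eq, isAdmissible_cons, Fin.card_filter_univ_succ',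
    Fin.cons_zero, Fin.cons_succ, and_assoc]
  cases x.1 <;> simp [add_comm]

theorem finsum_mem_sep_head_eq {α M : Type*} [AddCommMonoid M] (x : α)
    (s : Set (Fin (N + 1) → α)) (F : (Fin (N + 1) → α) → M) :
    ∑ᶠ w ∈ {w ∈ s | w 0 = x}, F w = ∑ᶠ u ∈ {u | Fin.cons x u ∈ s}, F (Fin.cons x u) := by
  have hbij : Set.BijOn (Fin.cons x) {u | Fin.cons x u ∈ s} {w ∈ s | w 0 = x} := by
    refine ⟨fun u hu => ⟨hu, Fin.cons_zero (α := fun _ => α) x u⟩,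
      (Fin.cons_right_injective (α := fun _ => α) x).injOn, ?_⟩
    rintro w ⟨hw, rfl⟩
    exact ⟨Fin.tail w, by rwa [Set.mem_ofPred_eq, Fin.cons_self_tail], Fin.cons_self_tail w⟩
  exact (finsum_mem_eq_of_bijOn _ hbij fun _ _ => rfl).symm

section Weights

variable {R : Type*} [CommSemiring R] (φ : Bool → ℤ → R)

def wordWeight (r : ℤ) (w : Fin N → Bool × ℤ) : R :=
  ∏ i, φ (w i).1 (r - (w i).2)

def totalWeight (r lo : ℤ) (N m n : ℕ) : R :=
  ∑ᶠ w ∈ admissibleWords r lo N m n, wordWeight φ r w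

theorem wordWeight_shiftWord (r δ : ℤ) (w : Fin N → Bool × ℤ) :
    wordWeight φ (r + δ) (shiftWord δ w) = wordWeight φ r w := by
  simp only [wordWeight, shiftWord, add_sub_add_right_eq_sub]

theorem wordWeight_cons (r : ℤ) (x : Bool × ℤ) (u : Fin N → Bool × ℤ) :
    wordWeight φ r (Fin.cons x u : Fin (N + 1) → Bool × ℤ) = φ x.1 (r - x.2) * wordWeight φ r u := by
  simp only [wordWeight, Fin.prod_univ_succ, Fin.cons_zero, Fin.cons_succ]

theorem totalWeight_shift (r lo δ : ℤ) (N m n : ℕ) :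
    totalWeight φ (r + δ) (lo + δ) N m n = totalWeight φ r lo N m n := by
  have hinv : ∀ δ' (w : Fin N → Bool × ℤ), shiftWord (-δ') (shiftWord δ' w) = w := fun δ' w =>
    funext fun i => by simp [shiftWord]
  have hbij : Set.BijOn (shiftWord δ) (admissibleWords r lo N m n)
      (admissibleWords (r + δ) (lo + δ) N m n) := by
    refine Set.InvOn.bijOn (f' := shiftWord (-δ))
      ⟨fun w _ => hinv δ w, fun w _ => by simpa using hinv (-δ) w⟩
      (fun w hw => (shiftWord_mem_admissibleWords δ w).2 hw) fun w hw => ?_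
    simpa using (shiftWord_mem_admissibleWords (-δ) w).2 hw
  exact (finsum_mem_eq_of_bijOn _ hbij fun w _ => (wordWeight_shiftWord φ r δ w).symm).symm

theorem admissibleWords_succ_eq_union {r : ℤ} {m n : ℕ} :
    admissibleWords r 0 (N + 1) m n = admissibleWords r 1 (N + 1) m n ∪
      {w ∈ admissibleWords r 0 (N + 1) m n | w 0 = (true, 0)} ∪
      {w ∈ admissibleWords r 0 (N + 1) m n | w 0 = (false, 0)} := by
  ext w
  cases w using Fin.consCases with
  | cons x u =>
    obtain ⟨b, d⟩ := x
    simp only [Set.mem_union, Set.mem_ofPred_eq, cons_mem_admissibleWords, Fin.cons_zero,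
      Prod.mk.injEq]
    rcases eq_or_ne d 0 with rfl | hd
    · cases b <;> simp
    · have : 0 ≤ d ↔ 1 ≤ d := by omega
      cases b <;> simp [hd, this]

theorem finsum_mem_sep_head_wordWeight (x : Bool × ℤ) (r lo : ℤ) (m n : ℕ) :
    ∑ᶠ w ∈ {w ∈ admissibleWords r lo (N + 1) m n | w 0 = x}, wordWeight φ r w =
      φ x.1 (r - x.2) *
        ∑ᶠ u ∈ Fin.cons x ⁻¹' admissibleWords r lo (N + 1) m n, wordWeight φ r u := by
  rw [finsum_mem_sep_head_eq, mul_finsum_mem' _ _ ((admissibleWords_finite r lo (N + 1) m n).preimage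
    (Fin.cons_right_injective (α := fun _ => Bool × ℤ) x).injOn)]
  simp only [wordWeight_cons]
  rfl

theorem finsum_mem_sep_head_true {r : ℤ} (hr : 0 ≤ r) (m n : ℕ) :
    ∑ᶠ w ∈ {w ∈ admissibleWords r 0 (N + 1) m n | w 0 = (true, 0)}, wordWeight φ r w =
      if m = 0 then 0 else φ true r * totalWeight φ (r + 1) 0 N (m - 1) n := by
  rw [finsum_mem_sep_head_wordWeight]
  rcases m with _ | m
  · have : Fin.cons (true, 0) ⁻¹' admissibleWords r 0 (N + 1) 0 n = ∅ := by
      ext u; simp [cons_mem_admissibleWords]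
    simp [this]
  · have htail : Fin.cons (true, 0) ⁻¹' admissibleWords r 0 (N + 1) (m + 1) n =
        admissibleWords r (-1) N m n := by
      ext u
      rw [Set.mem_preimage, cons_mem_admissibleWords]
      simp [admissibleWords, hr]
    have hshift : totalWeight φ r (-1) N m n = totalWeight φ (r + 1) 0 N m n := by
      simpa using (totalWeight_shift φ r (-1) 1 N m n).symm
    simp only [htail, sub_zero, Nat.add_one_ne_zero, if_false, Nat.add_sub_cancel]
    exact congrArg _ hshift

theorem finsum_mem_sep_head_false {r : ℤ} (hr : 0 ≤ r) (m n : ℕ) :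
    ∑ᶠ w ∈ {w ∈ admissibleWords r 0 (N + 1) m n | w 0 = (false, 0)}, wordWeight φ r w =
      if n = 0 then 0 else φ false r * totalWeight φ r 0 N m (n - 1) := by
  rw [finsum_mem_sep_head_wordWeight]
  rcases n with _ | n
  · have : Fin.cons (false, 0) ⁻¹' admissibleWords r 0 (N + 1) m 0 = ∅ := by
      ext u; simp [cons_mem_admissibleWords]
    simp [this]
  · have htail : Fin.cons (false, 0) ⁻¹' admissibleWords r 0 (N + 1) m (n + 1) =
        admissibleWords r 0 N m n := by
      ext u
      rw [Set.mem_preimage, cons_mem_admissibleWords]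
      simp [admissibleWords, hr]
    simp [htail, totalWeight]

theorem totalWeight_succ {r : ℤ} (hr : 0 ≤ r) (m n : ℕ) :
    totalWeight φ r 0 (N + 1) m n =
      totalWeight φ (r - 1) 0 (N + 1) m n +
        (if m = 0 then 0 else φ true r * totalWeight φ (r + 1) 0 N (m - 1) n) +
        (if n = 0 then 0 else φ false r * totalWeight φ r 0 N m (n - 1)) := by
  have hfin := admissibleWords_finite r 0 (N + 1) m n
  have hhead : ∀ w ∈ admissibleWords r 1 (N + 1) m n, 1 ≤ (w 0).2 := fun w hw =>
    (hw.1.1 N.succ_pos).1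
  have hdisj₁ : Disjoint (admissibleWords r 1 (N + 1) m n)
      {w ∈ admissibleWords r 0 (N + 1) m n | w 0 = (true, 0)} :=
    Set.disjoint_left.2 fun w hw hw' => by simpa [hw'.2] using hhead w hw
  have hdisj₂ : Disjoint (admissibleWords r 1 (N + 1) m n ∪
      {w ∈ admissibleWords r 0 (N + 1) m n | w 0 = (true, 0)})
      {w ∈ admissibleWords r 0 (N + 1) m n | w 0 = (false, 0)} := by
    refine Set.disjoint_union_left.2 ⟨Set.disjoint_left.2 fun w hw hw' => ?_,
      Set.disjoint_left.2 fun w hw hw' => ?_⟩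
    · simpa [hw'.2] using hhead w hw
    · simp [hw.2] at hw'
  have hlower : totalWeight φ (r - 1) 0 (N + 1) m n = totalWeight φ r 1 (N + 1) m n := by
    simpa using (totalWeight_shift φ (r - 1) 0 1 (N + 1) m n).symm
  rw [← finsum_mem_sep_head_true φ hr, ← finsum_mem_sep_head_false φ hr, hlower, totalWeight, totalWeight,
    ← finsum_mem_union hdisj₁ (admissibleWords_finite ..) (hfin.subset (Set.sep_subset _ _)),
    ← finsum_mem_union hdisj₂ ((admissibleWords_finite ..).union (hfin.subset (Set.sep_subset _ _)))
      (hfin.subset (Set.sep_subset _ _)), ← admissibleWords_succ_eq_union]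

theorem totalWeight_empty (r lo : ℤ) : totalWeight φ r lo 0 0 0 = 1 := by
  have : admissibleWords r lo 0 0 0 = Set.univ :=
    Set.eq_univ_of_forall fun w => ⟨⟨fun h => absurd h (lt_irrefl 0), fun i h => absurd h (by omega)⟩,
      by simp, by simp⟩
  simp [totalWeight, this, wordWeight, finsum_unique]

theorem totalWeight_eq_zero_of_lt {r lo : ℤ} (h : r < lo) (N m n : ℕ) :
    totalWeight φ r lo (N + 1) m n = 0 := by
  have : admissibleWords r lo (N + 1) m n = ∅ :=
    Set.eq_empty_of_forall_notMem fun w hw => by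
      have := hw.1.1 N.succ_pos
      omega
  simp [totalWeight, this]

def wordSetWeight (r : ℤ) (m n : ℕ) : R :=
  totalWeight φ r 0 (m + n) m n

theorem wordSetWeight_zero_zero (r : ℤ) : wordSetWeight φ r 0 0 = 1 :=
  totalWeight_empty φ r 0

theorem wordSetWeight_eq_zero_of_neg {r : ℤ} (hr : r < 0) {m n : ℕ} (h : 0 < m + n) :
    wordSetWeight φ r m n = 0 := by
  obtain ⟨N, hN⟩ : ∃ N, m + n = N + 1 := ⟨m + n - 1, by omega⟩
  rw [wordSetWeight, hN, totalWeight_eq_zero_of_lt φ hr]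

theorem wordSetWeight_eq {r : ℤ} (hr : 0 ≤ r) {m n : ℕ} (h : 0 < m + n) :
    wordSetWeight φ r m n =
      wordSetWeight φ (r - 1) m n +
        (if m = 0 then 0 else φ true r * wordSetWeight φ (r + 1) (m - 1) n) +
        (if n = 0 then 0 else φ false r * wordSetWeight φ r m (n - 1)) := by
  obtain ⟨N, hN⟩ : ∃ N, m + n = N + 1 := ⟨m + n - 1, by omega⟩
  rw [wordSetWeight, wordSetWeight, wordSetWeight, wordSetWeight, hN, totalWeight_succ φ hr]
  split_ifs with hm hn hn
  · rfl
  · rw [show m + (n - 1) = N by omega]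
  · rw [show m - 1 + n = N by omega]
  · rw [show m - 1 + n = N by omega, show m + (n - 1) = N by omega]

/-- The sum of `wordSetWeight φ r m n` over `2 * m + n = l`, parametrised by
`m = p.1`, `n = 2 * p.2 + l % 2` with `p.1 + p.2 = l / 2`. -/
def sizeWeight (r : ℤ) (l : ℕ) : R :=
  ∑ p ∈ antidiagonal (l / 2), wordSetWeight φ r p.1 (2 * p.2 + l % 2)

theorem sizeWeight_two_mul (r : ℤ) (k : ℕ) :
    sizeWeight φ r (2 * k) = ∑ p ∈ antidiagonal k, wordSetWeight φ r p.1 (2 * p.2) := by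
  simp [sizeWeight]

theorem sizeWeight_two_mul_add_one (r : ℤ) (k : ℕ) :
    sizeWeight φ r (2 * k + 1) = ∑ p ∈ antidiagonal k, wordSetWeight φ r p.1 (2 * p.2 + 1) := by
  simp [sizeWeight, show (2 * k + 1) / 2 = k by omega]

theorem sizeWeight_zero (r : ℤ) : sizeWeight φ r 0 = 1 := by
  simp [sizeWeight, wordSetWeight_zero_zero]

theorem sizeWeight_succ_of_neg {r : ℤ} (hr : r < 0) (l : ℕ) : sizeWeight φ r (l + 1) = 0 :=
  sum_eq_zero fun p hp => wordSetWeight_eq_zero_of_neg φ hr (by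
    rw [HasAntidiagonal.mem_antidiagonal] at hp
    omega)

theorem sizeWeight_succ {r : ℤ} (hr : 0 ≤ r) (l : ℕ) :
    sizeWeight φ r (l + 1) = sizeWeight φ (r - 1) (l + 1) + φ false r * sizeWeight φ r l +
      (if l = 0 then 0 else φ true r * sizeWeight φ (r + 1) (l - 1)) := by
  obtain ⟨k, rfl | rfl⟩ := Nat.even_or_odd' l
  · have hf : ∑ p ∈ antidiagonal k,
        (if p.1 = 0 then 0 else φ true r * wordSetWeight φ (r + 1) (p.1 - 1) (2 * p.2 + 1)) =
        if 2 * k = 0 then 0 else φ true r * sizeWeight φ (r + 1) (2 * k - 1) := by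
      rcases k with _ | k
      · simp
      · rw [Nat.sum_antidiagonal_succ, show 2 * (k + 1) - 1 = 2 * k + 1 by omega,
          sizeWeight_two_mul_add_one, mul_sum]
        simp
    have hg : ∑ p ∈ antidiagonal k,
        (if 2 * p.2 + 1 = 0 then 0 else φ false r * wordSetWeight φ r p.1 (2 * p.2 + 1 - 1)) =
        φ false r * sizeWeight φ r (2 * k) := by
      simp [sizeWeight_two_mul, mul_sum]
    rw [sizeWeight_two_mul_add_one, sizeWeight_two_mul_add_one,
      sum_congr rfl fun p _ => wordSetWeight_eq φ hr (m := p.1) (n := 2 * p.2 + 1) (by omega),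
      sum_add_distrib, sum_add_distrib, hf, hg]
    ring
  · have hf : ∑ p ∈ antidiagonal (k + 1),
        (if p.1 = 0 then 0 else φ true r * wordSetWeight φ (r + 1) (p.1 - 1) (2 * p.2)) =
        φ true r * sizeWeight φ (r + 1) (2 * k) := by
      rw [Nat.sum_antidiagonal_succ, sizeWeight_two_mul, mul_sum]
      simp
    have hg : ∑ p ∈ antidiagonal (k + 1),
        (if 2 * p.2 = 0 then 0 else φ false r * wordSetWeight φ r p.1 (2 * p.2 - 1)) =
        φ false r * sizeWeight φ r (2 * k + 1) := by
      rw [Nat.sum_antidiagonal_succ', sizeWeight_two_mul_add_one, mul_sum]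
      simp [show ∀ j, 2 * (j + 1) - 1 = 2 * j + 1 by omega]
    rw [show 2 * k + 1 + 1 = 2 * (k + 1) by ring, sizeWeight_two_mul, sizeWeight_two_mul,
      sum_congr rfl fun p hp => wordSetWeight_eq φ hr (m := p.1) (n := 2 * p.2) (by
        rw [HasAntidiagonal.mem_antidiagonal] at hp
        omega),
      sum_add_distrib, sum_add_distrib, hf, hg, if_neg (by omega), Nat.add_sub_cancel]
    ring

end Weights

end Words

theorem eq_of_recursion {R : Type*} [CommSemiring R] (F G : ℕ → R) (C : ℕ → ℕ → R)
    (T : ℤ → ℕ → R)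
    (hC0 : ∀ i j : ℕ, j < i → C i j = 0)
    (hC1 : ∀ i : ℕ, C i i = 1)
    (hC2 : ∀ i j : ℕ, 1 ≤ j →
      C i j = (if i = 0 then 0 else C (i - 1) (j - 1)) + G i * C i (j - 1) + F i * C (i + 1) (j - 1))
    (hT0 : ∀ r : ℕ, T r 0 = 1) (hTneg : ∀ l : ℕ, T (-1) (l + 1) = 0)
    (hT : ∀ r l : ℕ, T r (l + 1) =
      T (r - 1) (l + 1) + G r * T r l + (if l = 0 then 0 else F r * T (r + 1 : ℕ) (l - 1))) :
    ∀ l r : ℕ, C r (r + l) = T r l := by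
  intro l
  induction l using Nat.strong_induction_on with
  | _ l ih =>
    rcases l with _ | l
    · intro r
      rw [add_zero, hC1, hT0]
    have hnext : ∀ r : ℕ, C (r + 1) (r + l) = if l = 0 then 0 else T (r + 1 : ℕ) (l - 1) := by
      intro r
      rcases l with _ | l
      · exact hC0 _ _ (by omega)
      · simpa [show r + (l + 1) = r + 1 + l by ring] using ih l (by omega) (r + 1)
    intro r
    induction r with
    | zero =>
      rw [hC2 0 _ (by omega), hT 0 l, if_pos rfl, Nat.cast_zero, zero_sub, hTneg,
        show 0 + (l + 1) - 1 = 0 + l by omega, ih l (by omega) 0, hnext 0]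
      simp only [Nat.cast_zero, mul_ite, mul_zero]
    | succ r ihr =>
      rw [hC2 (r + 1) _ (by omega), hT (r + 1) l, if_neg r.succ_ne_zero, Nat.add_sub_cancel,
        Nat.cast_succ, add_sub_cancel_right, show r + 1 + (l + 1) - 1 = r + (l + 1) by omega, ihr,
        show r + (l + 1) = r + 1 + l by ring, ih l (by omega) (r + 1), hnext (r + 1)]
      simp only [Nat.cast_succ, mul_ite, mul_zero]

def letterWeight {K : Type*} [Field K] (a b c d t : K) (isF : Bool) (e : ℤ) : K :=
  if isF then fF a b c d t (t ^ e) else gF a b c d t (t ^ e)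

theorem wordSet_eq_admissibleWords (r m n : ℕ) :
    wordSet r m n = admissibleWords r 0 (m + n) m n := by
  ext w
  have hstep : ∀ x y : Bool × ℤ, ((x.1 = true → x.2 - 1 ≤ y.2) ∧ (x.1 = false → x.2 ≤ y.2)) ↔
      (x.2 - if x.1 then 1 else 0) ≤ y.2 := by
    rintro ⟨_ | _, _⟩ y <;> simp
  simp only [wordSet, admissibleWords, IsAdmissible, Set.mem_ofPred_eq, ← and_assoc, hstep]
  tauto

theorem finsum_wordSet_eq_wordSetWeight {K : Type*} [Field K] (a b c d t : K) (r m n : ℕ) :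
    ∑ᶠ w ∈ wordSet r m n, ∏ i, letterVal a b c d t r (w i) =
      wordSetWeight (letterWeight a b c d t) r m n := by
  rw [wordSet_eq_admissibleWords]
  rfl

theorem C_combinatorial_formula_general {K : Type*} [Field K] (a b c d t : K)
    (C : ℕ → ℕ → K)
    (hC0 : ∀ i j : ℕ, j < i → C i j = 0)
    (hC1 : ∀ i : ℕ, C i i = 1)
    (hC2 : ∀ i j : ℕ, 1 ≤ j →
      C i j = (if i = 0 then 0 else C (i-1) (j-1)) +
        gF a b c d t (t^i) * C i (j-1) + fF a b c d t (t^i) * C (i+1) (j-1))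
    (r k : ℕ) :
    C r (r + 2*k) =
      (∑ p ∈ Finset.HasAntidiagonal.antidiagonal k,
        ∑ᶠ w ∈ wordSet r p.1 (2*p.2), ∏ i, letterVal a b c d t r (w i)) ∧
    C r (r + 2*k + 1) =
      (∑ p ∈ Finset.HasAntidiagonal.antidiagonal k,
        ∑ᶠ w ∈ wordSet r p.1 (2*p.2 + 1), ∏ i, letterVal a b c d t r (w i)) := by
  have hC := eq_of_recursion _ _ C _ hC0 hC1 hC2 (fun r => sizeWeight_zero _ r)
    (sizeWeight_succ_of_neg _ (by norm_num)) fun r l => by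
      simpa [letterWeight] using sizeWeight_succ (letterWeight a b c d t) (Int.natCast_nonneg r) l
  simp only [finsum_wordSet_eq_wordSetWeight]
  rw [hC, add_assoc, hC, sizeWeight_two_mul, sizeWeight_two_mul_add_one]
  exact ⟨rfl, rfl⟩

/-- Combinatorial expression for the entries of the transition matrix `C`:
`C_{r,r+2k}` (resp. `C_{r,r+2k+1}`) is the sum over `k₁+k₂=k` of the total
weights of the words in `𝒫^{(r)}_{k₁,2k₂}` (resp. `𝒫^{(r)}_{k₁,2k₂+1}`). -/
theorem C_combinatorial_formula {K : Type*} [Field K] (a b c d t : K)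
    (ht : t ≠ 0) (h1t : (1:K) - t ≠ 0)
    (hgen : ∀ m : ℤ,
      (1 - a*b*c*d*t^(2*m)/t) ≠ 0 ∧ (1 - a*b*c*d*t^(2*m)) ≠ 0 ∧
      (1 - a*b*c*d*t*t^(2*m)) ≠ 0 ∧ (1 - a*b*c*d*t^(2*m)/t^2) ≠ 0)
    (C : ℕ → ℕ → K)
    (hC0 : ∀ i j : ℕ, j < i → C i j = 0)
    (hC1 : ∀ i : ℕ, C i i = 1)
    (hC2 : ∀ i j : ℕ, 1 ≤ j →
      C i j = (if i = 0 then 0 else C (i-1) (j-1)) +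
        gF a b c d t (t^i) * C i (j-1) + fF a b c d t (t^i) * C (i+1) (j-1))
    (r k : ℕ) :
    C r (r + 2*k) =
      (∑ p ∈ Finset.HasAntidiagonal.antidiagonal k,
        ∑ᶠ w ∈ wordSet r p.1 (2*p.2), ∏ i, letterVal a b c d t r (w i)) ∧
    C r (r + 2*k + 1) =
      (∑ p ∈ Finset.HasAntidiagonal.antidiagonal k,
        ∑ᶠ w ∈ wordSet r p.1 (2*p.2 + 1), ∏ i, letterVal a b c d t r (w i)) :=
  C_combinatorial_formula_general a b c d t C hC0 hC1 hC2 r k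

end
end
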